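/- arXiv:1911.01837 — 2 statements merged into one kernel-verified Lean document; each statement's English description precedes it below -/
import Mathlib

section
/- Let d ∈ ℤ with d = −1 or d ∈ {1, 2, −2}, let f ∈ ℤ[X] be nonconstant, and let P, Q ∈ ℤ[X] satisfy P^2 − (f^2 + d)·Q^2 = 1. If d = −1, then P = ±N_n(f^2 − 1, f) and Q = ±D_n(f^2 − 1, f) for some n ≥ 0; if d ∈ {1, 2, −2}, then P = ±N_n(f^2 + d, f)/(−d)^{n/2} and Q = ±D_n(f^2 + d, f)/(−d)^{n/2} for some even n ≥ 0, where the signs of P and Q may be chosen independently (any of the four sign combinations (±P, ±Q)). -/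
/-- The Rédei polynomial `N_n(α, z) = ∑_{k=0}^{⌊n/2⌋} C(n, 2k) α^k z^(n-2k)`. -/
def redeiN {R : Type*} [CommRing R] (n : ℕ) (α z : R) : R :=
  ∑ k ∈ Finset.range (n / 2 + 1), (n.choose (2 * k) : R) * α ^ k * z ^ (n - 2 * k)

/-- The Rédei polynomial `D_n(α, z) = ∑_{k=0}^{⌊n/2⌋} C(n, 2k+1) α^k z^(n-2k-1)`. -/
def redeiD {R : Type*} [CommRing R] (n : ℕ) (α z : R) : R :=
  ∑ k ∈ Finset.range (n / 2 + 1), (n.choose (2 * k + 1) : R) * α ^ k * z ^ (n - 2 * k - 1)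


section Generic
variable {R : Type*} [CommRing R] (α z : R)

lemma redeiN_zero : redeiN 0 α z = 1 := by simp [redeiN]

lemma redeiD_zero : redeiD 0 α z = 0 := by simp [redeiD]

lemma redeiN_one : redeiN 1 α z = z := by simp [redeiN]

lemma redeiD_one : redeiD 1 α z = 1 := by simp [redeiD]

lemma redeiN_eq_sum (n M : ℕ) (hM : n / 2 + 1 ≤ M) :
    redeiN n α z = ∑ k ∈ Finset.range M, (n.choose (2 * k) : R) * α ^ k * z ^ (n - 2 * k) := by
  rw [redeiN]
  apply Finset.sum_subset (Finset.range_subset_range.mpr hM)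
  intro k hk hk'
  simp only [Finset.mem_range] at hk hk'
  have : n < 2 * k := by omega
  simp [Nat.choose_eq_zero_of_lt this]

lemma redeiD_eq_sum (n M : ℕ) (hM : n / 2 + 1 ≤ M) :
    redeiD n α z = ∑ k ∈ Finset.range M, (n.choose (2 * k + 1) : R) * α ^ k * z ^ (n - 2 * k - 1) := by
  rw [redeiD]
  apply Finset.sum_subset (Finset.range_subset_range.mpr hM)
  intro k hk hk'
  simp only [Finset.mem_range] at hk hk'
  have : n < 2 * k + 1 := by omega
  simp [Nat.choose_eq_zero_of_lt this]

lemma redeiD_succ (n : ℕ) :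
    redeiD (n + 1) α z = redeiN n α z + z * redeiD n α z := by
  rw [redeiD_eq_sum α z (n+1) (n+2) (by omega), redeiN_eq_sum α z n (n+2) (by omega),
    redeiD_eq_sum α z n (n+2) (by omega), Finset.mul_sum, ← Finset.sum_add_distrib]
  apply Finset.sum_congr rfl
  intro k _
  have hpascal : (n+1).choose (2*k+1) = n.choose (2*k) + n.choose (2*k+1) :=
    Nat.choose_succ_succ n (2*k)
  have he : n + 1 - 2*k - 1 = n - 2*k := by omega
  rw [he, hpascal]
  rcases le_or_gt (2*k+1) n with h | h
  · have hz : z * z ^ (n - (2*k+1)) = z ^ (n - 2*k) := by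
      rw [← pow_succ']
      congr 1
      omega
    push_cast
    rw [show n - 2*k - 1 = n - (2*k+1) from by omega]
    linear_combination (-(n.choose (2*k+1) : R)) * α ^ k * hz
  · have h1 : n.choose (2*k+1) = 0 := Nat.choose_eq_zero_of_lt h
    rw [h1]
    push_cast
    ring

lemma redeiN_succ (n : ℕ) :
    redeiN (n + 1) α z = z * redeiN n α z + α * redeiD n α z := by
  rw [redeiN_eq_sum α z (n+1) (n+3) (by omega), redeiN_eq_sum α z n (n+3) (by omega),
    redeiD_eq_sum α z n (n+2) (by omega)]
  rw [Finset.sum_range_succ' (fun k => (((n+1).choose (2*k) : R)) * α ^ k * z ^ (n+1 - 2*k)) (n+2),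
    Finset.sum_range_succ' (fun k => ((n.choose (2*k) : R)) * α ^ k * z ^ (n - 2*k)) (n+2)]
  have key : ∀ k ∈ Finset.range (n+2),
      (((n+1).choose (2*(k+1)) : R)) * α ^ (k+1) * z ^ (n+1 - 2*(k+1)) =
      z * (((n.choose (2*(k+1)) : R)) * α ^ (k+1) * z ^ (n - 2*(k+1))) +
      α * ((n.choose (2*k+1) : R) * α ^ k * z ^ (n - 2*k - 1)) := by
    intro k _
    have hpascal : (n+1).choose (2*(k+1)) = n.choose (2*k+1) + n.choose (2*(k+1)) := by
      rw [show 2*(k+1) = 2*k+1+1 from by ring]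
      exact Nat.choose_succ_succ n (2*k+1)
    have he : n + 1 - 2*(k+1) = n - (2*k+1) := by omega
    rw [he, hpascal]
    rcases le_or_gt (2*(k+1)) n with h | h
    · have hz : z * z ^ (n - 2*(k+1)) = z ^ (n - (2*k+1)) := by
        rw [← pow_succ']
        congr 1
        omega
      push_cast
      rw [show n - 2*k - 1 = n - (2*k+1) from by omega]
      linear_combination (-(n.choose (2*(k+1)) : R)) * α ^ (k+1) * hz
    · have h1 : n.choose (2*(k+1)) = 0 := Nat.choose_eq_zero_of_lt h
      rw [h1, show n - 2*k - 1 = n - (2*k+1) from by omega]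
      push_cast
      ring
  rw [Finset.sum_congr rfl key, Finset.sum_add_distrib, ← Finset.mul_sum, ← Finset.mul_sum]
  have h0 : (((n+1).choose (2*0) : R)) * α ^ 0 * z ^ (n+1-2*0) =
      z * (((n.choose (2*0) : R)) * α ^ 0 * z ^ (n-2*0)) := by
    simp [pow_succ, mul_comm]
  rw [h0]
  ring

lemma redei_norm (n : ℕ) :
    (redeiN n α z) ^ 2 - α * (redeiD n α z) ^ 2 = (z ^ 2 - α) ^ n := by
  induction n with
  | zero => simp [redeiN_zero, redeiD_zero]
  | succ n ih =>
    rw [redeiN_succ, redeiD_succ, pow_succ]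
    linear_combination (z ^ 2 - α) * ih

lemma redei_conjN (n : ℕ) :
    z * redeiN (n+1) α z - α * redeiD (n+1) α z = (z ^ 2 - α) * redeiN n α z := by
  rw [redeiN_succ, redeiD_succ]; ring

lemma redei_conjD (n : ℕ) :
    z * redeiD (n+1) α z - redeiN (n+1) α z = (z ^ 2 - α) * redeiD n α z := by
  rw [redeiN_succ, redeiD_succ]; ring

end Generic


section IntAux

lemma even_of_sq_eq_two_pow (t : ℕ) (ht : t ≠ 0) (k : ℕ) (h : t ^ 2 = 2 ^ k) : Even k := by
  have h2 : Nat.Prime 2 := Nat.prime_two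
  have := congrArg (fun m => m.factorization 2) h
  simp only [Nat.factorization_pow, Nat.Prime.factorization h2] at this
  simp only [Finsupp.smul_apply, Finsupp.single_eq_same, smul_eq_mul] at this
  exact ⟨t.factorization 2, by omega⟩

lemma int_sq_pow (d : ℤ) (hd4 : d = -1 ∨ d = 1 ∨ d = 2 ∨ d = -2) (p : ℤ) (k : ℕ)
    (h : p ^ 2 = (-d) ^ k) : ∃ b : ℕ, p = (-d) ^ b ∨ p = -(-d) ^ b := by
  have key : ∃ b : ℕ, p ^ 2 = ((-d) ^ b) ^ 2 := by
    rcases hd4 with rfl | rfl | rfl | rfl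
    · exact ⟨0, by simpa using h⟩
    · rcases Nat.even_or_odd k with he | ho
      · obtain ⟨b, rfl⟩ := he
        exact ⟨b, by rw [h]; ring⟩
      · exfalso
        rw [ho.neg_one_pow] at h
        nlinarith [sq_nonneg p]
    · -- d = 2
      have hk : Even k := by
        apply even_of_sq_eq_two_pow p.natAbs _ k
        · have := congrArg Int.natAbs h
          simpa [Int.natAbs_pow] using this
        · intro h0
          rw [Int.natAbs_eq_zero.mp h0] at h
          have : (0:ℤ) < (-2:ℤ)^k ∨ (-2:ℤ)^k < 0 := by
            rcases Nat.even_or_odd k with he | ho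
            · left; exact he.pow_pos (by norm_num)
            · right; exact ho.pow_neg (by norm_num)
          simp at h
          omega
      obtain ⟨b, rfl⟩ := hk
      exact ⟨b, by rw [h, show b + b = b * 2 from by omega, pow_mul]⟩
    · -- d = -2
      have hk : Even k := by
        apply even_of_sq_eq_two_pow p.natAbs _ k
        · have := congrArg Int.natAbs h
          simpa [Int.natAbs_pow] using this
        · intro h0
          rw [Int.natAbs_eq_zero.mp h0] at h
          have h2 : (0:ℤ) < 2^k := by positivity
          simp at h
          omega
      obtain ⟨b, rfl⟩ := hk
      exact ⟨b, by rw [h, show b + b = b * 2 from by omega, pow_mul]⟩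
  obtain ⟨b, hb⟩ := key
  refine ⟨b, ?_⟩
  have : (p - (-d) ^ b) * (p + (-d) ^ b) = 0 := by linear_combination hb
  rcases mul_eq_zero.mp this with h' | h'
  · left; linarith
  · right; linarith

lemma int_neg_d_sq (d : ℤ) (hd4 : d = -1 ∨ d = 1 ∨ d = 2 ∨ d = -2) (q : ℤ) (k : ℕ)
    (h : -(d * q ^ 2) = (-d) ^ k) : ∃ b : ℕ, q = (-d) ^ b ∨ q = -(-d) ^ b := by
  rcases hd4 with rfl | rfl | rfl | rfl
  · exact int_sq_pow (-1) (by norm_num) q k (by linarith)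
  · -- d = 1 : -q² = (-1)^k
    apply int_sq_pow 1 (by norm_num) q 0
    rcases Nat.even_or_odd k with he | ho
    · exfalso; rw [he.neg_one_pow] at h; nlinarith [sq_nonneg q]
    · rw [ho.neg_one_pow] at h; simpa using (by linarith : q^2 = 1)
  · -- d = 2 : -(2q²) = (-2)^k
    rcases k with _ | k'
    · exfalso; simp at h; omega
    · apply int_sq_pow 2 (by norm_num) q k'
      rw [show ((-2:ℤ))^(k'+1) = (-2) * (-2)^k' from pow_succ' _ _] at h
      have h2 : (-2:ℤ) * q^2 = (-2) * (-2)^k' := by linarith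
      have := mul_left_cancel₀ (by norm_num : (-2:ℤ) ≠ 0) h2
      linarith
  · -- d = -2 : 2q² = 2^k
    rcases k with _ | k'
    · exfalso; simp at h; omega
    · apply int_sq_pow (-2) (by norm_num) q k'
      norm_num at h ⊢
      rw [show ((2:ℤ))^(k'+1) = 2 * 2^k' from pow_succ' _ _] at h
      have h2 : (2:ℤ) * q^2 = 2 * 2^k' := by linarith
      have := mul_left_cancel₀ (by norm_num : (2:ℤ) ≠ 0) h2
      linarith

lemma two_pow_inj (d : ℤ) (hd2 : d = 2 ∨ d = -2) (i j : ℕ) (h : (-d) ^ i = (-d) ^ j) : i = j := by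
  have habs : (2:ℕ) ^ i = 2 ^ j := by
    have := congrArg Int.natAbs h
    rcases hd2 with rfl | rfl <;> simpa [Int.natAbs_pow] using this
  exact Nat.pow_right_injective (le_refl 2) habs

lemma neg_one_pow_or (j : ℕ) : (-1:ℤ) ^ j = 1 ∨ (-1:ℤ) ^ j = -1 := by
  rcases Nat.even_or_odd j with he | ho
  · left; exact he.neg_one_pow
  · right; exact ho.neg_one_pow

end IntAux


section Main
open Polynomial

def RedeiRel (d : ℤ) (f P Q : Polynomial ℤ) : Prop :=
  ∃ n a b : ℕ,
    (C ((-d)^a) * P = C ((-d)^b) * redeiN n (f^2 + C d) f ∨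
     C ((-d)^a) * P = -(C ((-d)^b) * redeiN n (f^2 + C d) f)) ∧
    (C ((-d)^a) * Q = C ((-d)^b) * redeiD n (f^2 + C d) f ∨
     C ((-d)^a) * Q = -(C ((-d)^b) * redeiD n (f^2 + C d) f))

lemma rel_neg (d : ℤ) (f P Q : Polynomial ℤ) (h : RedeiRel d f (-P) Q) : RedeiRel d f P Q := by
  obtain ⟨n, a, b, hP, hQ⟩ := h
  refine ⟨n, a, b, ?_, hQ⟩
  rcases hP with hP | hP
  · exact Or.inr (by linear_combination -hP)
  · exact Or.inl (by linear_combination -hP)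

lemma hCsucc (d : ℤ) (j : ℕ) : (C ((-d)^(j+1)) : Polynomial ℤ) = C ((-d)^j) * (-(C d)) := by
  rw [pow_succ, map_mul, map_neg]

lemma ascend (d : ℤ) (f P Q : Polynomial ℤ)
    (h : RedeiRel d f (P * f - (f^2 + C d) * Q) (Q * f - P)) : RedeiRel d f P Q := by
  obtain ⟨n, a, b, hP1, hQ1⟩ := h
  rcases hP1 with hP1 | hP1 <;> rcases hQ1 with hQ1 | hQ1
  · refine ⟨n + 1, a + 1, b, Or.inl ?_, Or.inl ?_⟩
    · rw [hCsucc, redeiN_succ]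
      linear_combination f * hP1 + (f^2 + C d) * hQ1
    · rw [hCsucc, redeiD_succ]
      linear_combination hP1 + f * hQ1
  · rcases n with _ | j
    · rw [redeiN_zero] at hP1
      rw [redeiD_zero] at hQ1
      refine ⟨1, a + 1, b, Or.inl ?_, Or.inl ?_⟩
      · rw [hCsucc, redeiN_one]
        linear_combination f * hP1 + (f^2 + C d) * hQ1
      · rw [hCsucc, redeiD_one]
        linear_combination hP1 + f * hQ1
    · refine ⟨j, a + 1, b + 1, Or.inl ?_, Or.inr ?_⟩
      · rw [hCsucc, hCsucc]
        linear_combination f * hP1 + (f^2 + C d) * hQ1 +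
          C ((-d)^b) * redei_conjN (f^2 + C d) f j
      · rw [hCsucc, hCsucc]
        linear_combination hP1 + f * hQ1 - C ((-d)^b) * redei_conjD (f^2 + C d) f j
  · rcases n with _ | j
    · rw [redeiN_zero] at hP1
      rw [redeiD_zero] at hQ1
      refine ⟨1, a + 1, b, Or.inr ?_, Or.inr ?_⟩
      · rw [hCsucc, redeiN_one]
        linear_combination f * hP1 + (f^2 + C d) * hQ1
      · rw [hCsucc, redeiD_one]
        linear_combination hP1 + f * hQ1
    · refine ⟨j, a + 1, b + 1, Or.inr ?_, Or.inl ?_⟩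
      · rw [hCsucc, hCsucc]
        linear_combination f * hP1 + (f^2 + C d) * hQ1 -
          C ((-d)^b) * redei_conjN (f^2 + C d) f j
      · rw [hCsucc, hCsucc]
        linear_combination hP1 + f * hQ1 + C ((-d)^b) * redei_conjD (f^2 + C d) f j
  · refine ⟨n + 1, a + 1, b, Or.inr ?_, Or.inr ?_⟩
    · rw [hCsucc, redeiN_succ]
      linear_combination f * hP1 + (f^2 + C d) * hQ1
    · rw [hCsucc, redeiD_succ]
      linear_combination hP1 + f * hQ1

lemma key_lemma (d : ℤ) (hd4 : d = -1 ∨ d = 1 ∨ d = 2 ∨ d = -2) (f : Polynomial ℤ)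
    (hf : 0 < f.natDegree) :
    ∀ (N : ℕ) (Q P : Polynomial ℤ) (k : ℕ), Q.natDegree ≤ N →
      P^2 - (f^2 + C d) * Q^2 = C ((-d)^k) → RedeiRel d f P Q := by
  have hd0 : d ≠ 0 := by rcases hd4 with rfl | rfl | rfl | rfl <;> norm_num
  have hnd0 : (-d : ℤ) ≠ 0 := neg_ne_zero.mpr hd0
  have hf0 : f ≠ 0 := fun h => by simp [h] at hf
  intro N
  induction N using Nat.strong_induction_on with
  | _ N IH =>
  intro Q P k hQN hPell
  by_cases hQ0 : Q = 0
  · -- base case Q = 0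
    subst hQ0
    have hPell' : P^2 = C ((-d)^k) := by linear_combination hPell
    have hdegP : P.natDegree = 0 := by
      have h1 : (P^2).natDegree = 0 := by rw [hPell']; exact natDegree_C _
      rw [natDegree_pow] at h1
      omega
    obtain ⟨p, hp⟩ := natDegree_eq_zero.mp hdegP
    have hp2 : p^2 = (-d)^k := by
      apply C_injective
      rw [map_pow, hp, hPell']
    obtain ⟨b, hb⟩ := int_sq_pow d hd4 p k hp2
    refine ⟨0, 0, b, ?_, Or.inl (by simp [redeiD_zero])⟩
    rcases hb with hb | hb
    · left
      rw [redeiN_zero, pow_zero, map_one, one_mul, mul_one, ← hp, hb]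
    · right
      rw [redeiN_zero, pow_zero, map_one, one_mul, mul_one, ← hp, hb, map_neg]
  by_cases hQc : Q.natDegree = 0
  · -- base case Q nonzero constant
    obtain ⟨q, hq⟩ := natDegree_eq_zero.mp hQc
    have hqne : q ≠ 0 := fun h => hQ0 (by rw [← hq, h, map_zero])
    have huv : (Q * f - P) * (Q * f + P) = -(C d) * Q^2 - C ((-d)^k) := by
      linear_combination -hPell
    have hC : -(C d) * Q^2 - C ((-d)^k) = C (-(d * q^2) - (-d)^k) := by
      simp only [map_sub, map_neg, map_mul, map_pow, hq]
      ring
    have h0 : -(C d) * Q^2 - C ((-d)^k) = 0 := by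
      by_contra hne
      have hune : Q * f - P ≠ 0 := by
        intro h
        rw [h, zero_mul] at huv
        exact hne huv.symm
      have hvne : Q * f + P ≠ 0 := by
        intro h
        rw [h, mul_zero] at huv
        exact hne huv.symm
      have hsum : (Q * f - P).natDegree + (Q * f + P).natDegree = 0 := by
        rw [← natDegree_mul hune hvne, huv, hC, natDegree_C]
      have h2 : (Q * f - P) + (Q * f + P) = C (2 * q) * f := by
        rw [map_mul, map_ofNat, ← hq]
        ring
      have hle := natDegree_add_le (Q * f - P) (Q * f + P)
      rw [h2, natDegree_C_mul (mul_ne_zero two_ne_zero hqne)] at hle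
      omega
    have hint : -(d * q^2) - (-d)^k = 0 := by
      rw [hC] at h0
      exact C_eq_zero.mp h0
    obtain ⟨b, hb⟩ := int_neg_d_sq d hd4 q k (by linarith)
    have hPQ : P = Q * f ∨ P = -(Q * f) := by
      rcases mul_eq_zero.mp (huv.trans h0) with h | h
      · left; linear_combination -h
      · right; linear_combination h
    refine ⟨1, 0, b, ?_, ?_⟩
    · rw [redeiN_one, pow_zero, map_one, one_mul]
      rcases hPQ with h | h <;> rcases hb with h' | h'
      · left; rw [h, ← hq, h']
      · right; rw [h, ← hq, h', map_neg]; try ring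
      · right; rw [h, ← hq, h']; try ring
      · left; rw [h, ← hq, h', map_neg]; try ring
    · rw [redeiD_one, pow_zero, map_one, one_mul, mul_one, ← hq]
      rcases hb with h' | h'
      · left; rw [h']
      · right; rw [h', map_neg]
  · -- descent
    have hQdeg : 1 ≤ Q.natDegree := Nat.pos_of_ne_zero hQc
    have huv : (Q * f - P) * (Q * f + P) = -(C d) * Q^2 - C ((-d)^k) := by
      linear_combination -hPell
    have hRdeg : (-(C d) * Q^2 - C ((-d)^k)).natDegree = 2 * Q.natDegree := by
      have e : -(C d) * Q^2 - C ((-d)^k) = C (-d) * Q^2 + C (-((-d)^k)) := by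
        rw [map_neg, map_neg]
        ring
      rw [e, natDegree_add_C, natDegree_C_mul hnd0, natDegree_pow]
    have hRne : -(C d) * Q^2 - C ((-d)^k) ≠ 0 := by
      intro h
      rw [h, natDegree_zero] at hRdeg
      omega
    have hune : Q * f - P ≠ 0 := by
      intro h
      rw [h, zero_mul] at huv
      exact hRne huv.symm
    have hvne : Q * f + P ≠ 0 := by
      intro h
      rw [h, mul_zero] at huv
      exact hRne huv.symm
    have hsum : (Q * f - P).natDegree + (Q * f + P).natDegree = 2 * Q.natDegree := by
      rw [← natDegree_mul hune hvne, huv, hRdeg]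
    have hadd : ((Q * f - P) + (Q * f + P)).natDegree = Q.natDegree + f.natDegree := by
      have h2 : (Q * f - P) + (Q * f + P) = C 2 * (Q * f) := by
        rw [map_ofNat]
        ring
      rw [h2, natDegree_C_mul (two_ne_zero), natDegree_mul hQ0 hf0]
    have hmax := natDegree_add_le (Q * f - P) (Q * f + P)
    rw [hadd] at hmax
    have hnewPell : ∀ P' : Polynomial ℤ, P'^2 - (f^2 + C d) * Q^2 = C ((-d)^k) →
        (P' * f - (f^2 + C d) * Q)^2 - (f^2 + C d) * (Q * f - P')^2 = C ((-d)^(k+1)) := by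
      intro P' hP'
      rw [show ((-d : ℤ))^(k+1) = (-d)^k * (-d) from pow_succ _ _, map_mul, map_neg]
      linear_combination (-(C d)) * hP'
    rcases le_or_gt ((Q * f - P).natDegree) ((Q * f + P).natDegree) with hc | hc
    · have hv' : Q.natDegree + f.natDegree ≤ (Q * f + P).natDegree := by
        rw [max_eq_right hc] at hmax
        exact hmax
      have hlt : (Q * f - P).natDegree < Q.natDegree := by omega
      apply ascend
      exact IH ((Q * f - P).natDegree) (by omega) (Q * f - P) (P * f - (f^2 + C d) * Q)
        (k+1) le_rfl (hnewPell P hPell)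
    · have hv' : Q.natDegree + f.natDegree ≤ (Q * f - P).natDegree := by
        rw [max_eq_left hc.le] at hmax
        exact hmax
      have hlt : (Q * f + P).natDegree < Q.natDegree := by omega
      apply rel_neg
      apply ascend
      have heq : Q * f - (-P) = Q * f + P := by ring
      have hP' : (-P)^2 - (f^2 + C d) * Q^2 = C ((-d)^k) := by linear_combination hPell
      have := IH ((Q * f + P).natDegree) (by omega) (Q * f - (-P)) ((-P) * f - (f^2 + C d) * Q)
        (k+1) (by rw [heq]) (hnewPell (-P) hP')
      exact this

lemma sign_transfer (x y : Polynomial ℤ) (s t u : ℤ)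
    (hs : s = 1 ∨ s = -1) (ht : t = 1 ∨ t = -1) (hu : u = 1 ∨ u = -1)
    (h : C s * x = C t * y ∨ C s * x = -(C t * y)) :
    C u * x = y ∨ C u * x = -y := by
  rcases hs with rfl | rfl <;> rcases ht with rfl | rfl <;> rcases hu with rfl | rfl <;>
    rcases h with h | h <;>
    simp only [map_one, map_neg, one_mul, neg_mul, neg_neg] at h ⊢ <;>
    first
      | (left; linear_combination h)
      | (right; linear_combination h)
      | (left; linear_combination -h)
      | (right; linear_combination -h)

end Main

open Polynomial in
/-- All integer polynomial solutions of `P² − (f² + d)·Q² = 1` for nonconstant `f` are, up to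
sign, the Rédei polynomials: for `d = −1` they are `(±N_n, ±D_n)` for some `n`; for
`d ∈ {1, 2, −2}` they are `(±N_n/(−d)^{n/2}, ±D_n/(−d)^{n/2})` for some even `n`. -/
theorem pell_all_solutions (d : ℤ) (hd : d = -1 ∨ d ∈ ({1, 2, -2} : Set ℤ))
    (f : Polynomial ℤ) (hf : 0 < f.natDegree) (P Q : Polynomial ℤ)
    (hPell : P ^ 2 - (f ^ 2 + C d) * Q ^ 2 = 1) :
    (d = -1 → ∃ n : ℕ,
      (P = redeiN n (f ^ 2 + C d) f ∨ P = -redeiN n (f ^ 2 + C d) f) ∧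
      (Q = redeiD n (f ^ 2 + C d) f ∨ Q = -redeiD n (f ^ 2 + C d) f)) ∧
    (d ∈ ({1, 2, -2} : Set ℤ) → ∃ n : ℕ, Even n ∧
      (C ((-d) ^ (n / 2)) * P = redeiN n (f ^ 2 + C d) f ∨
        C ((-d) ^ (n / 2)) * P = -redeiN n (f ^ 2 + C d) f) ∧
      (C ((-d) ^ (n / 2)) * Q = redeiD n (f ^ 2 + C d) f ∨
        C ((-d) ^ (n / 2)) * Q = -redeiD n (f ^ 2 + C d) f)) := by
  have hd4 : d = -1 ∨ d = 1 ∨ d = 2 ∨ d = -2 := by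
    rcases hd with h | h
    · exact Or.inl h
    · simp only [Set.mem_insert_iff, Set.mem_singleton_iff] at h
      tauto
  have hd0 : d ≠ 0 := by rcases hd4 with rfl | rfl | rfl | rfl <;> norm_num
  have hnd0 : (-d : ℤ) ≠ 0 := neg_ne_zero.mpr hd0
  have hPell0 : P^2 - (f^2 + C d) * Q^2 = C ((-d)^0) := by
    rw [pow_zero, map_one]
    exact hPell
  obtain ⟨n, a, b, hP, hQ⟩ := key_lemma d hd4 f hf (Q.natDegree) Q P 0 le_rfl hPell0
  -- norm balance
  have h1 : (C ((-d)^a) * P)^2 = (C ((-d)^b) * redeiN n (f^2 + C d) f)^2 := by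
    rcases hP with h | h <;> rw [h] <;> ring
  have h2 : (C ((-d)^a) * Q)^2 = (C ((-d)^b) * redeiD n (f^2 + C d) f)^2 := by
    rcases hQ with h | h <;> rw [h] <;> ring
  have h3 : (redeiN n (f^2 + C d) f)^2 - (f^2 + C d) * (redeiD n (f^2 + C d) f)^2
      = C ((-d)^n) := by
    have := redei_norm (f^2 + C d) f n
    rw [this, show (f^2 - (f^2 + C d)) = -(C d) from by ring, ← map_neg, ← map_pow]
  have hpoly : (C ((-d)^a) : Polynomial ℤ)^2 = (C ((-d)^b))^2 * C ((-d)^n) := by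
    linear_combination h1 - (f^2 + C d) * h2 - (C ((-d)^a))^2 * hPell
      + (C ((-d)^b))^2 * h3
  have hint : ((-d : ℤ)^a)^2 = ((-d)^b)^2 * (-d)^n := by
    have hpoly2 := hpoly
    rw [← map_pow, ← map_pow, ← map_mul] at hpoly2
    exact C_injective hpoly2
  constructor
  · -- d = -1
    intro hd1
    subst hd1
    refine ⟨n, ?_, ?_⟩
    · rcases hP with h | h
      · left
        have : ((-(-1) : ℤ))^a = 1 := by norm_num
        rw [this, map_one, one_mul] at h
        have hb1 : ((-(-1) : ℤ))^b = 1 := by norm_num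
        rw [hb1, map_one, one_mul] at h
        exact h
      · right
        have : ((-(-1) : ℤ))^a = 1 := by norm_num
        rw [this, map_one, one_mul] at h
        have hb1 : ((-(-1) : ℤ))^b = 1 := by norm_num
        rw [hb1, map_one, one_mul] at h
        exact h
    · rcases hQ with h | h
      · left
        have : ((-(-1) : ℤ))^a = 1 := by norm_num
        rw [this, map_one, one_mul] at h
        have hb1 : ((-(-1) : ℤ))^b = 1 := by norm_num
        rw [hb1, map_one, one_mul] at h
        exact h
      · right
        have : ((-(-1) : ℤ))^a = 1 := by norm_num
        rw [this, map_one, one_mul] at h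
        have hb1 : ((-(-1) : ℤ))^b = 1 := by norm_num
        rw [hb1, map_one, one_mul] at h
        exact h
  · -- d ∈ {1, 2, -2}
    intro hmem
    have hd3 : d = 1 ∨ d = 2 ∨ d = -2 := by
      simp only [Set.mem_insert_iff, Set.mem_singleton_iff] at hmem
      tauto
    rcases hd3 with rfl | hd2
    · -- d = 1
      have ha1 : (((-1 : ℤ))^a)^2 = 1 := by
        rcases neg_one_pow_or a with h | h <;> rw [h] <;> norm_num
      have hb1 : (((-1 : ℤ))^b)^2 = 1 := by
        rcases neg_one_pow_or b with h | h <;> rw [h] <;> norm_num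
      have hn1 : ((-1 : ℤ))^n = 1 := by
        rw [ha1, hb1, one_mul] at hint
        exact hint.symm
      have hne : Even n := by
        rcases Nat.even_or_odd n with h | h
        · exact h
        · rw [h.neg_one_pow] at hn1
          norm_num at hn1
      refine ⟨n, hne, ?_, ?_⟩
      · exact sign_transfer P _ _ _ _ (neg_one_pow_or a) (neg_one_pow_or b)
          (neg_one_pow_or (n/2)) hP
      · exact sign_transfer Q _ _ _ _ (neg_one_pow_or a) (neg_one_pow_or b)
          (neg_one_pow_or (n/2)) hQ
    · -- |d| = 2
      have hint' : (-d : ℤ)^(a*2) = (-d)^(b*2+n) := by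
        rw [← pow_mul, ← pow_mul, ← pow_add] at hint
        exact hint
      have hab := two_pow_inj d hd2 _ _ hint'
      have hne : Even n := ⟨a - b, by omega⟩
      have habn : a = b + n / 2 := by omega
      have hCb : (C ((-d)^b) : Polynomial ℤ) ≠ 0 := by
        rw [ne_eq, C_eq_zero]
        exact pow_ne_zero b hnd0
      subst habn
      rw [pow_add, map_mul, mul_assoc] at hP hQ
      refine ⟨n, hne, ?_, ?_⟩
      · rcases hP with h | h
        · exact Or.inl (mul_left_cancel₀ hCb h)
        · exact Or.inr (mul_left_cancel₀ hCb (by linear_combination h))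
      · rcases hQ with h | h
        · exact Or.inl (mul_left_cancel₀ hCb h)
        · exact Or.inr (mul_left_cancel₀ hCb (by linear_combination h))
end

section
/- Define sequences of integer polynomials by A'_0 = 1, B'_0 = 0 and, for n ≥ 1, A'_n = x·A'_{n−1} + (x^2 − 1)·B'_{n−1} and B'_n = A'_{n−1} + x·B'_{n−1} (Nathanson's solutions for d = −1). Then for every natural number n, A'_n = N_n(x^2 − 1, x) and B'_n = D_n(x^2 − 1, x), the Rédei polynomials with parameters α = x^2 − 1 and z = x. -/
lemma redeiN_ext {R : Type*} [CommRing R] (n m : ℕ) (h : n / 2 + 1 ≤ m) (α z : R) :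
    redeiN n α z = ∑ k ∈ Finset.range m, (n.choose (2 * k) : R) * α ^ k * z ^ (n - 2 * k) := by
  unfold redeiN
  refine Finset.sum_subset (Finset.range_subset_range.2 h) fun k _ hk => ?_
  simp only [Finset.mem_range, not_lt] at hk
  have : n < 2 * k := by omega
  simp [Nat.choose_eq_zero_of_lt this]

lemma redeiD_ext {R : Type*} [CommRing R] (n m : ℕ) (h : n / 2 + 1 ≤ m) (α z : R) :
    redeiD n α z = ∑ k ∈ Finset.range m, (n.choose (2 * k + 1) : R) * α ^ k * z ^ (n - 2 * k - 1) := by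
  unfold redeiD
  refine Finset.sum_subset (Finset.range_subset_range.2 h) fun k _ hk => ?_
  simp only [Finset.mem_range, not_lt] at hk
  have : n < 2 * k + 1 := by omega
  simp [Nat.choose_eq_zero_of_lt this]

lemma redeiN_step {R : Type*} [CommRing R] (n : ℕ) (α z : R) :
    redeiN (n + 1) α z = z * redeiN n α z + α * redeiD n α z := by
  rw [redeiN_ext (n + 1) (n + 2) (by omega), redeiN_ext n (n + 2) (by omega),
    redeiD_ext n (n + 2) (by omega), Finset.mul_sum, Finset.mul_sum,
    Finset.sum_range_succ' (fun k => ((n + 1).choose (2 * k) : R) * α ^ k * z ^ (n + 1 - 2 * k)) (n + 1),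
    Finset.sum_range_succ' (fun k => z * ((n.choose (2 * k) : R) * α ^ k * z ^ (n - 2 * k))) (n + 1),
    Finset.sum_range_succ (fun k => α * ((n.choose (2 * k + 1) : R) * α ^ k * z ^ (n - 2 * k - 1))) (n + 1)]
  have h0 : (n.choose (2 * (n + 1) + 1) : R) = 0 := by
    exact_mod_cast congrArg (Nat.cast (R := R))
      (Nat.choose_eq_zero_of_lt (show n < 2 * (n + 1) + 1 by omega))
  have hsum : ∀ k ∈ Finset.range (n + 1),
      ((n + 1).choose (2 * (k + 1)) : R) * α ^ (k + 1) * z ^ (n + 1 - 2 * (k + 1)) =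
      z * ((n.choose (2 * (k + 1)) : R) * α ^ (k + 1) * z ^ (n - 2 * (k + 1))) +
      α * ((n.choose (2 * k + 1) : R) * α ^ k * z ^ (n - 2 * k - 1)) := by
    intro k _
    rw [show 2 * (k + 1) = 2 * k + 2 by ring]
    have hP : (n + 1).choose (2 * k + 2) = n.choose (2 * k + 1) + n.choose (2 * k + 2) :=
      Nat.choose_succ_succ n (2 * k + 1)
    rcases le_or_gt (2 * k + 2) n with hle | hgt
    · rw [hP, show n + 1 - (2 * k + 2) = (n - (2 * k + 2)) + 1 by omega,
        show n - 2 * k - 1 = (n - (2 * k + 2)) + 1 by omega]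
      push_cast
      ring
    · rcases eq_or_lt_of_le (show n ≤ 2 * k + 1 by omega) with heq | hlt
      · rw [hP, Nat.choose_eq_zero_of_lt (show n < 2 * k + 2 by omega),
          show n - 2 * k - 1 = 0 by omega, show n + 1 - (2 * k + 2) = 0 by omega,
          ← heq, Nat.choose_self]
        push_cast
        ring
      · rw [hP, Nat.choose_eq_zero_of_lt (show n < 2 * k + 2 by omega),
          Nat.choose_eq_zero_of_lt (show n < 2 * k + 1 by omega)]
        push_cast
        ring
  rw [Finset.sum_congr rfl hsum, Finset.sum_add_distrib, h0]
  simp only [Nat.choose_zero_right, Nat.choose_self, Nat.cast_one, mul_zero, zero_mul, add_zero,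
    pow_zero, mul_one, one_mul, Nat.mul_zero, Nat.sub_zero]
  ring

lemma redeiD_step {R : Type*} [CommRing R] (n : ℕ) (α z : R) :
    redeiD (n + 1) α z = redeiN n α z + z * redeiD n α z := by
  rw [redeiD_ext (n + 1) (n + 2) (by omega), redeiN_ext n (n + 2) (by omega),
    redeiD_ext n (n + 2) (by omega), Finset.mul_sum, ← Finset.sum_add_distrib]
  refine Finset.sum_congr rfl fun k _ => ?_
  have hP : (n + 1).choose (2 * k + 1) = n.choose (2 * k) + n.choose (2 * k + 1) :=
    Nat.choose_succ_succ n (2 * k)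
  have e1 : n + 1 - 2 * k - 1 = n - 2 * k := by omega
  rcases le_or_gt (2 * k + 1) n with hle | hgt
  · rw [hP, e1, show n - 2 * k = (n - 2 * k - 1) + 1 by omega]
    push_cast
    ring
  · rw [hP, e1, Nat.choose_eq_zero_of_lt hgt]
    push_cast
    ring


open Polynomial in
/-- Nathanson's sequence `A'_n` for `d = −1`: `A'_0 = 1`,
`A'_n = x·A'_{n−1} + (x² − 1)·B'_{n−1}`. -/
noncomputable def nathansonA : ℕ → Polynomial ℤ × Polynomial ℤ
  | 0 => (1, 0)
  | n + 1 =>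
    (X * (nathansonA n).1 + (X ^ 2 - 1) * (nathansonA n).2,
      (nathansonA n).1 + X * (nathansonA n).2)

open Polynomial in
/-- Nathanson's solutions for `d = −1` coincide with the Rédei polynomials:
`A'_n = N_n(x² − 1, x)` and `B'_n = D_n(x² − 1, x)` for every `n`. -/
theorem nathanson_eq_redei (n : ℕ) :
    (nathansonA n).1 = redeiN n (X ^ 2 - 1 : Polynomial ℤ) X ∧
    (nathansonA n).2 = redeiD n (X ^ 2 - 1 : Polynomial ℤ) X := by
  induction n with
  | zero => simp [nathansonA, redeiN, redeiD]
  | succ n ih =>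
    obtain ⟨h1, h2⟩ := ih
    constructor
    · show X * (nathansonA n).1 + (X ^ 2 - 1) * (nathansonA n).2 = _
      rw [h1, h2, redeiN_step]
    · show (nathansonA n).1 + X * (nathansonA n).2 = _
      rw [h1, h2, redeiD_step]
end
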